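/- Let r and s be fuzzy relations on a set X over a linear complete residuated lattice and ε ∈ L. Then r ∘ s =_ε r ∘_ε s, where (r ∘ s)(a,b) = sup_c r(a,c) ⊗ s(c,b) and (r ∘_ε s)(a,b) = ⋁_ε { r(a,c) ⊗_ε s(c,b) : c ∈ X }. -/

import Mathlib

/-- A linear and complete residuated lattice: a complete linear order carrying a
commutative monoid structure whose unit `1` is the greatest element, together with a
residuum satisfying the adjunction property. -/
class ResiduatedLattice (L : Type*) extends CompleteLinearOrder L, CommMonoid L where
  res : L → L → L
  adjunction : ∀ x y z : L, x * y ≤ z ↔ x ≤ res y z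
  one_eq_top : (1 : L) = ⊤

variable {L : Type*} [ResiduatedLattice L]

/-- `x ≤_ε y` iff `x ≤ y` or `x ≤ ε`. -/
def leE (ε x y : L) : Prop := x ≤ y ∨ x ≤ ε

/-- `x =_ε y` iff `x ≤_ε y` and `y ≤_ε x`. -/
def eqE (ε x y : L) : Prop := leE ε x y ∧ leE ε y x

/-- `x ⊗_ε y` is `x ⊗ y` if `x ⊗ y > ε`, and `ε` otherwise. -/
def mulE (ε x y : L) : L := if ε < x * y then x * y else ε

/-- `x →_ε y := (x ∨ ε) → (y ∨ ε)`. -/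
def resE (ε x y : L) : L := ResiduatedLattice.res (x ⊔ ε) (y ⊔ ε)

/-- Composition of fuzzy relations: `(r ∘ s)(a,b) = sup_c r(a,c) ⊗ s(c,b)`. -/
noncomputable def relComp {X : Type*} (r s : X → X → L) : X → X → L :=
  fun a b => ⨆ c, r a c * s c b

/-- `ε`-composition of fuzzy relations:
`(r ∘_ε s)(a,b) = ⋁_ε { r(a,c) ⊗_ε s(c,b) : c ∈ X }`. -/
noncomputable def relCompE {X : Type*} (ε : L) (r s : X → X → L) : X → X → L :=
  fun a b => (⨆ c, mulE ε (r a c) (s c b)) ⊔ ε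

theorem mulE_eq_mul_sup (ε x y : L) : mulE ε x y = x * y ⊔ ε := by
  unfold mulE
  split_ifs with h
  · exact (sup_of_le_left h.le).symm
  · exact (sup_of_le_right (not_lt.mp h)).symm

theorem relCompE_eq_relComp_sup {X : Type*} (ε : L) (r s : X → X → L) (a b : X) :
    relCompE ε r s a b = relComp r s a b ⊔ ε := by
  simp only [relCompE, relComp, mulE_eq_mul_sup]
  refine le_antisymm (sup_le (iSup_le fun c => ?_) le_sup_right) (sup_le ?_ le_sup_right)
  · exact sup_le_sup_right (le_iSup (fun c => r a c * s c b) c) ε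
  · exact le_sup_of_le_left (iSup_mono fun c => le_sup_left)

theorem eqE_sup_self (ε x : L) : eqE ε x (x ⊔ ε) := by
  refine ⟨Or.inl le_sup_left, ?_⟩
  rcases le_total x ε with h | h
  · exact Or.inr (sup_of_le_right h).le
  · exact Or.inl (sup_of_le_left h).le

theorem stmt_7 {X : Type*} (ε : L) (r s : X → X → L) :
    ∀ a b : X, eqE ε (relComp r s a b) (relCompE ε r s a b) := by
  intro a b
  rw [relCompE_eq_relComp_sup]
  exact eqE_sup_self ε _
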